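/- Let d be even and suppose {X^k, Y^k, Λ^k} is generated by the nonconvex ADMM iteration for the rank-one reformulation, with Sym(Λ^0) = A and Y^0 symmetric. Then for every k ≥ 1: Sym(Λ^k) = A and Y^k = Sym(X^k). Consequently the iteration simplifies to X^{k+1} ∈ argmin_{X ∈ C} ⟨−Λ^k − τ Sym(X^k), X⟩ and Λ^{k+1} = Λ^k − τ(X^{k+1} − Sym(X^{k+1})). -/

import Mathlib

/-!
`Sym` is a linear idempotent projection. Symmetrising the `Y`-update shows that
`Y^{k+1} = Sym X^{k+1}` as soon as `Sym Λ^k = A`; the multiplier update then changes `Λ` by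
`τ (X^{k+1} - Sym X^{k+1})`, which `Sym` annihilates, so `Sym Λ^k = A` is invariant. Since every
point of `C` has unit Frobenius norm, `L_τ(·, Y, Λ)` is affine on `C` with linear part
`⟨-Λ - τ Y, ·⟩`, which turns the `X`-subproblem into a linear one.
-/

open scoped BigOperators
open Matrix

namespace SpherePoly

noncomputable def tinner {n d : ℕ} (A B : (Fin d → Fin n) → ℝ) : ℝ :=
  ∑ i : Fin d → Fin n, A i * B i

noncomputable def symT {n d : ℕ} (A : (Fin d → Fin n) → ℝ) : (Fin d → Fin n) → ℝ :=
  fun i => (∑ π : Equiv.Perm (Fin d), A (i ∘ π)) / (Nat.factorial d : ℝ)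

def IsSymT {n d : ℕ} (A : (Fin d → Fin n) → ℝ) : Prop :=
  ∀ (π : Equiv.Perm (Fin d)) (i : Fin d → Fin n), A (i ∘ π) = A i

def mat2 {n m : ℕ} (X : (Fin (2 * m) → Fin n) → ℝ) :
    Matrix (Fin m → Fin n) (Fin m → Fin n) ℝ :=
  fun a b => X fun i => Sum.elim a b (finSumFinEquiv.symm (Fin.cast (by omega) i))

def CSet (n m : ℕ) : Set ((Fin (2 * m) → Fin n) → ℝ) :=
  {X | ∃ z : (Fin m → Fin n) → ℝ, (∑ a, z a ^ 2 = 1) ∧ ∀ a b, mat2 X a b = z a * z b}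

/-- The augmented Lagrangian `L_τ(X, Y, Λ) = ⟨−A, Y⟩ − ⟨Λ, X−Y⟩ + (τ/2)‖X−Y‖²`. -/
noncomputable def Ltau {n m : ℕ} (A : (Fin (2 * m) → Fin n) → ℝ) (τ : ℝ)
    (X Y Λ : (Fin (2 * m) → Fin n) → ℝ) : ℝ :=
  tinner (fun i => -A i) Y - tinner Λ (X - Y) + (τ / 2) * ∑ i, (X i - Y i) ^ 2

theorem symT_eq_self {n d : ℕ} {A : (Fin d → Fin n) → ℝ} (h : IsSymT A) : symT A = A := by
  funext i
  simp only [symT, h _ i, Finset.sum_const, Finset.card_univ, Fintype.card_perm,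
    Fintype.card_fin, nsmul_eq_mul]
  field_simp

theorem isSymT_symT {n d : ℕ} (A : (Fin d → Fin n) → ℝ) : IsSymT (symT A) := by
  intro σ i
  simp only [symT]
  congr 1
  rw [← Equiv.sum_comp (Equiv.mulLeft σ) (fun π => A (i ∘ π))]
  simp [Equiv.Perm.coe_mul, Function.comp_assoc]

theorem symT_symT {n d : ℕ} (A : (Fin d → Fin n) → ℝ) : symT (symT A) = symT A :=
  symT_eq_self (isSymT_symT A)

theorem symT_add {n d : ℕ} (A B : (Fin d → Fin n) → ℝ) : symT (A + B) = symT A + symT B := by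
  funext i
  simp [symT, Finset.sum_add_distrib, add_div]

theorem symT_sub {n d : ℕ} (A B : (Fin d → Fin n) → ℝ) : symT (A - B) = symT A - symT B := by
  funext i
  simp [symT, Finset.sum_sub_distrib, sub_div]

theorem symT_smul {n d : ℕ} (c : ℝ) (A : (Fin d → Fin n) → ℝ) : symT (c • A) = c • symT A := by
  funext i
  simp [symT, ← Finset.mul_sum, mul_div_assoc]

theorem symT_sub_symT {n d : ℕ} (A : (Fin d → Fin n) → ℝ) : symT (A - symT A) = 0 := by
  rw [symT_sub, symT_symT, sub_self]

theorem sum_sum_mat2_sq {n m : ℕ} (X : (Fin (2 * m) → Fin n) → ℝ) :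
    ∑ a, ∑ b, mat2 X a b ^ 2 = ∑ i, X i ^ 2 := by
  let e : ((Fin m → Fin n) × (Fin m → Fin n)) ≃ (Fin (2 * m) → Fin n) :=
    (Equiv.sumArrowEquivProdArrow (Fin m) (Fin m) (Fin n)).symm.trans
      (Equiv.arrowCongr (finSumFinEquiv.trans (finCongr (two_mul m).symm)) (Equiv.refl (Fin n)))
  rw [← Fintype.sum_prod_type', ← Equiv.sum_comp e]
  rfl

theorem sum_sq_eq_one_of_mem_CSet {n m : ℕ} {X : (Fin (2 * m) → Fin n) → ℝ}
    (hX : X ∈ CSet n m) : ∑ i, X i ^ 2 = 1 := by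
  obtain ⟨z, hz, hXz⟩ := hX
  rw [← sum_sum_mat2_sq]
  simp only [hXz, mul_pow, ← Finset.mul_sum, ← Finset.sum_mul, hz, one_mul]

theorem Ltau_eq_of_sum_sq_eq_one {n m : ℕ} (A : (Fin (2 * m) → Fin n) → ℝ) (τ : ℝ)
    (X Y Λ : (Fin (2 * m) → Fin n) → ℝ) (hX : ∑ i, X i ^ 2 = 1) :
    Ltau A τ X Y Λ =
      tinner (fun i => -A i) Y + tinner Λ Y + τ / 2 * (1 + ∑ i, Y i ^ 2) +
        tinner (fun i => -Λ i - τ * Y i) X := by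
  rw [← hX]
  simp only [Ltau, tinner, Pi.sub_apply, Finset.mul_sum, ← Finset.sum_add_distrib,
    ← Finset.sum_sub_distrib]
  exact Finset.sum_congr rfl fun i _ => by ring

theorem tinner_le_of_Ltau_le {n m : ℕ} {A : (Fin (2 * m) → Fin n) → ℝ} {τ : ℝ}
    {X Z Y Λ : (Fin (2 * m) → Fin n) → ℝ} (hX : X ∈ CSet n m) (hZ : Z ∈ CSet n m)
    (h : Ltau A τ X Y Λ ≤ Ltau A τ Z Y Λ) :
    tinner (fun i => -Λ i - τ * Y i) X ≤ tinner (fun i => -Λ i - τ * Y i) Z := by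
  rwa [Ltau_eq_of_sum_sq_eq_one A τ X Y Λ (sum_sq_eq_one_of_mem_CSet hX),
    Ltau_eq_of_sum_sq_eq_one A τ Z Y Λ (sum_sq_eq_one_of_mem_CSet hZ), add_le_add_iff_left] at h

theorem symT_admm_Y_update {n d : ℕ} {A Λ : (Fin d → Fin n) → ℝ} {τ : ℝ} (hτ : τ ≠ 0)
    (hΛ : symT Λ = A) (X : (Fin d → Fin n) → ℝ) :
    τ⁻¹ • symT (fun i => A i - Λ i + τ * X i) = symT X := by
  have hA : symT A = A := hΛ ▸ symT_symT Λ
  change τ⁻¹ • symT (A - Λ + τ • X) = _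
  rw [symT_add, symT_sub, symT_smul, hA, hΛ, sub_self, zero_add, smul_smul, inv_mul_cancel₀ hτ,
    one_smul]

theorem symT_sub_smul_sub_symT {n d : ℕ} (Λ X : (Fin d → Fin n) → ℝ) (τ : ℝ) :
    symT (Λ - τ • (X - symT X)) = symT Λ := by
  rw [symT_sub, symT_smul, symT_sub_symT, smul_zero, sub_zero]

theorem stmt18_general {n m : ℕ} (A : (Fin (2 * m) → Fin n) → ℝ)
    (τ : ℝ) (hτ : 0 < τ)
    (X Y Λ : ℕ → (Fin (2 * m) → Fin n) → ℝ)
    (hΛ0 : symT (Λ 0) = A)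
    (hX : ∀ k, X (k + 1) ∈ CSet n m ∧
      ∀ Z ∈ CSet n m, Ltau A τ (X (k + 1)) (Y k) (Λ k) ≤ Ltau A τ Z (Y k) (Λ k))
    (hY : ∀ k, Y (k + 1) = τ⁻¹ • symT (fun i => A i - Λ k i + τ * X (k + 1) i))
    (hL : ∀ k, Λ (k + 1) = Λ k - τ • (X (k + 1) - Y (k + 1))) :
    ∀ k, 1 ≤ k →
      symT (Λ k) = A ∧ Y k = symT (X k) ∧
      (∀ Z ∈ CSet n m,
        tinner (fun i => -Λ k i - τ * symT (X k) i) (X (k + 1)) ≤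
          tinner (fun i => -Λ k i - τ * symT (X k) i) Z) ∧
      Λ (k + 1) = Λ k - τ • (X (k + 1) - symT (X (k + 1))) := by
  have hΛ : ∀ k, symT (Λ k) = A := by
    intro k
    induction k with
    | zero => exact hΛ0
    | succ k ih =>
      rw [hL k, hY k, symT_admm_Y_update hτ.ne' ih, symT_sub_smul_sub_symT, ih]
  have hYsucc : ∀ k, Y (k + 1) = symT (X (k + 1)) := fun k =>
    (hY k).trans (symT_admm_Y_update hτ.ne' (hΛ k) _)
  intro k hk
  obtain ⟨k, rfl⟩ := Nat.exists_eq_add_one_of_ne_zero (Nat.one_le_iff_ne_zero.mp hk)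
  refine ⟨hΛ _, hYsucc k, fun Z hZ => ?_, by rw [hL, hYsucc]⟩
  rw [← hYsucc k]
  exact tinner_le_of_Ltau_le (hX _).1 hZ ((hX _).2 Z hZ)

/-- along the nonconvex ADMM iteration with `Sym(Λ⁰) = A` and `Y⁰`
symmetric, for every `k ≥ 1` one has `Sym(Λᵏ) = A` and `Yᵏ = Sym(Xᵏ)`; consequently the
iteration simplifies to `X^{k+1} ∈ argmin_{X∈C} ⟨−Λᵏ − τ Sym(Xᵏ), X⟩` and
`Λ^{k+1} = Λᵏ − τ(X^{k+1} − Sym(X^{k+1}))`. -/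
theorem stmt18 {n m : ℕ} (A : (Fin (2 * m) → Fin n) → ℝ) (hA : IsSymT A)
    (τ : ℝ) (hτ : 0 < τ)
    (X Y Λ : ℕ → (Fin (2 * m) → Fin n) → ℝ)
    (hΛ0 : symT (Λ 0) = A) (hY0 : IsSymT (Y 0))
    (hX : ∀ k, X (k + 1) ∈ CSet n m ∧
      ∀ Z ∈ CSet n m, Ltau A τ (X (k + 1)) (Y k) (Λ k) ≤ Ltau A τ Z (Y k) (Λ k))
    (hY : ∀ k, Y (k + 1) = τ⁻¹ • symT (fun i => A i - Λ k i + τ * X (k + 1) i))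
    (hL : ∀ k, Λ (k + 1) = Λ k - τ • (X (k + 1) - Y (k + 1))) :
    ∀ k, 1 ≤ k →
      symT (Λ k) = A ∧ Y k = symT (X k) ∧
      (∀ Z ∈ CSet n m,
        tinner (fun i => -Λ k i - τ * symT (X k) i) (X (k + 1)) ≤
          tinner (fun i => -Λ k i - τ * symT (X k) i) Z) ∧
      Λ (k + 1) = Λ k - τ • (X (k + 1) - symT (X (k + 1))) :=
  stmt18_general A τ hτ X Y Λ hΛ0 hX hY hL

end SpherePoly
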